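/- Let (X_k)_{k≥0} be a Markov chain on a finite state space S with a subset D ⊆ S. Suppose (a) for all x ∈ D, ℙ(X₁ ∉ D | X₀ = x) ≤ δ, and (b) for all x ∉ D, ℙ(τ_D > r | X₀ = x) ≤ ρ^r for some ρ ∈ (0,1) and all r ∈ ℕ. If X₀ ∈ D, then for every k ∈ ℕ, ℙ(X_k ∉ D) ≤ δ / (1 − ρ). -/
import Mathlib


open Finset

/-- Exit/return decomposition: if the one-step exit probability from `D` is
at most `δ` and return times to `D` from outside have geometric tails
`ℙ_x(τ_D > r) ≤ ρ^r`, then starting in `D`, `ℙ(X_k ∉ D) ≤ δ/(1−ρ)` for every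
`k`.  Here `u r x = ℙ_x(τ_D > r)` is characterized by its recursion and
`ℙ(X_k ∉ D) = ∑_{y∉D} P^k(x₀,y)`. -/
theorem outside_prob_le {S : Type*} [Fintype S] [DecidableEq S]
    (P : Matrix S S ℝ) (hP0 : ∀ x y, 0 ≤ P x y) (hP1 : ∀ x, ∑ y, P x y = 1)
    (D : Set S) [DecidablePred (· ∈ D)]
    (δ ρ : ℝ) (hδ : δ ∈ Set.Icc (0:ℝ) 1) (hρ : ρ ∈ Set.Ioo (0:ℝ) 1)
    (hexit : ∀ x ∈ D, ∑ y ∈ Finset.univ.filter (· ∉ D), P x y ≤ δ)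
    (u : ℕ → S → ℝ)
    (hu0 : ∀ x, u 0 x = if x ∈ D then 0 else 1)
    (huS : ∀ r x, u (r + 1) x = if x ∈ D then 0 else ∑ y, P x y * u r y)
    (hreturn : ∀ x, x ∉ D → ∀ r, u r x ≤ ρ ^ r)
    (x₀ : S) (hx₀ : x₀ ∈ D) (k : ℕ) :
    ∑ y ∈ Finset.univ.filter (· ∉ D), (P ^ k) x₀ y ≤ δ / (1 - ρ) := by
  obtain ⟨hρ0, hρ1⟩ := hρ
  obtain ⟨hδ0, hδ1⟩ := hδ
  have huD : ∀ m x, x ∈ D → u m x = 0 := by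
    intro m x hx
    cases m with
    | zero => simp [hu0, hx]
    | succ r => simp [huS, hx]
  have hu_nonneg : ∀ m x, 0 ≤ u m x := by
    intro m
    induction m with
    | zero => intro x; rw [hu0]; split <;> norm_num
    | succ r ih =>
      intro x
      rw [huS]
      split
      · exact le_refl 0
      · exact Finset.sum_nonneg fun y _ => mul_nonneg (hP0 x y) (ih y)
  have hstep : ∀ j x, x ∈ D → ∑ z, P x z * u j z ≤ δ * ρ ^ j := by
    intro j x hx
    have hsplit := Finset.sum_filter_add_sum_filter_not Finset.univ (· ∉ D)
      (fun z => P x z * u j z)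
    have h2 : ∑ z ∈ Finset.univ.filter (fun z => ¬ z ∉ D), P x z * u j z = 0 := by
      apply Finset.sum_eq_zero
      intro z hz
      simp only [Finset.mem_filter, not_not] at hz
      rw [huD j z hz.2, mul_zero]
    have h1 : ∑ z ∈ Finset.univ.filter (· ∉ D), P x z * u j z
        ≤ ∑ z ∈ Finset.univ.filter (· ∉ D), P x z * ρ ^ j := by
      apply Finset.sum_le_sum
      intro z hz
      simp only [Finset.mem_filter] at hz
      exact mul_le_mul_of_nonneg_left (hreturn z hz.2 j) (hP0 x z)
    calc ∑ z, P x z * u j z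
        = ∑ z ∈ Finset.univ.filter (· ∉ D), P x z * u j z := by
          rw [← hsplit, h2, add_zero]
      _ ≤ ∑ z ∈ Finset.univ.filter (· ∉ D), P x z * ρ ^ j := h1
      _ = (∑ z ∈ Finset.univ.filter (· ∉ D), P x z) * ρ ^ j := by
          rw [Finset.sum_mul]
      _ ≤ δ * ρ ^ j := by
          exact mul_le_mul_of_nonneg_right (hexit x hx) (le_of_lt (pow_pos hρ0 j))
  have main : ∀ n x, ∑ y ∈ Finset.univ.filter (· ∉ D), (P ^ n) x y
      ≤ u n x + δ * ∑ j ∈ Finset.range n, ρ ^ j := by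
    intro n
    induction n with
    | zero =>
      intro x
      simp only [pow_zero, Matrix.one_apply, Finset.range_zero, Finset.sum_empty,
        mul_zero, add_zero, hu0]
      by_cases hx : x ∈ D
      · rw [Finset.sum_eq_zero, if_pos hx]
        intro y hy
        simp only [Finset.mem_filter] at hy
        rw [if_neg]
        intro h; exact hy.2 (h ▸ hx)
      · rw [if_neg hx, Finset.sum_eq_single x]
        · rw [if_pos rfl]
        · intro y hy hyx; rw [if_neg (fun h => hyx h.symm)]
        · intro h; exact absurd (Finset.mem_filter.2 ⟨Finset.mem_univ x, hx⟩) h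
    | succ n ih =>
      intro x
      have hrw : ∑ y ∈ Finset.univ.filter (· ∉ D), (P ^ (n + 1)) x y
          = ∑ z, P x z * ∑ y ∈ Finset.univ.filter (· ∉ D), (P ^ n) z y := by
        simp_rw [pow_succ', Matrix.mul_apply, Finset.mul_sum]
        rw [Finset.sum_comm]
      rw [hrw]
      have hbd : ∑ z, P x z * ∑ y ∈ Finset.univ.filter (· ∉ D), (P ^ n) z y
          ≤ ∑ z, P x z * (u n z + δ * ∑ j ∈ Finset.range n, ρ ^ j) := by
        apply Finset.sum_le_sum
        intro z _
        exact mul_le_mul_of_nonneg_left (ih z) (hP0 x z)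
      have heq : ∑ z, P x z * (u n z + δ * ∑ j ∈ Finset.range n, ρ ^ j)
          = (∑ z, P x z * u n z) + δ * ∑ j ∈ Finset.range n, ρ ^ j := by
        simp_rw [mul_add]
        rw [Finset.sum_add_distrib, ← Finset.sum_mul, hP1, one_mul]
      refine le_trans hbd (le_trans (le_of_eq heq) ?_)
      by_cases hx : x ∈ D
      · rw [huD (n+1) x hx, Finset.sum_range_succ]
        have := hstep n x hx
        linarith
      · rw [huS, if_neg hx, Finset.sum_range_succ]
        have : 0 ≤ δ * ρ ^ n := mul_nonneg hδ0 (le_of_lt (pow_pos hρ0 n))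
        linarith
  have h := main k x₀
  rw [huD k x₀ hx₀, zero_add] at h
  refine le_trans h ?_
  have hρne : ρ ≠ 1 := ne_of_lt hρ1
  rw [geom_sum_eq hρne]
  have h1ρ : (0:ℝ) < 1 - ρ := by linarith
  have hpk : 0 ≤ ρ ^ k := le_of_lt (pow_pos hρ0 k)
  have heq2 : (ρ ^ k - 1) / (ρ - 1) = (1 - ρ ^ k) / (1 - ρ) := by
    rw [div_eq_div_iff (by linarith) (by linarith)]; ring
  have hfrac : (ρ ^ k - 1) / (ρ - 1) ≤ 1 / (1 - ρ) := by
    rw [heq2, div_le_div_iff₀ h1ρ h1ρ]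
    nlinarith
  calc δ * ((ρ ^ k - 1) / (ρ - 1)) ≤ δ * (1 / (1 - ρ)) :=
        mul_le_mul_of_nonneg_left hfrac hδ0
    _ = δ / (1 - ρ) := by rw [mul_one_div]
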